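/- arXiv:2108.01849 — 3 statements merged into one kernel-verified Lean document; each statement's English description precedes it below -/
import Mathlib

section
/- A morphism of perfect complexes of abelian groups f : X → Y is a quasi-isomorphism if and only if X ⊗^L ℤ/m → Y ⊗^L ℤ/m is a quasi-isomorphism for every positive integer m. -/
/-!
Multiplication by `m` gives a distinguished triangle `X → X → X ⊗^L ℤ/m → X[1]`, natural in `X`,
whose long exact homology sequence involves `Hⁿ(X) / m` and the `m`-torsion of `Hⁿ⁺¹(X)`. If `f`
is a quasi-isomorphism, the five lemma makes `f ⊗^L ℤ/m` one. Conversely, if every `f ⊗^L ℤ/m`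
is a quasi-isomorphism, four-lemma chases show that the kernel of `Hⁿ(f)` is `m`-divisible for all
`m`, and so is its cokernel once `Hⁿ⁺¹(f)` is known to be injective. These kernels and cokernels
are finitely generated, and a finitely generated divisible abelian group vanishes.
-/

open CategoryTheory CochainComplex

/-- `X ⊗^L ℤ/m`, realized as the mapping cone of multiplication by `m`. -/
noncomputable def modM (X : CochainComplex AddCommGrpCat ℤ) (m : ℕ) :
    CochainComplex AddCommGrpCat ℤ :=
  mappingCone ((m : ℤ) • 𝟙 X)

/-- The morphism `X ⊗^L ℤ/m → Y ⊗^L ℤ/m` induced by `f : X ⟶ Y`. -/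
noncomputable def modMMap {X Y : CochainComplex AddCommGrpCat ℤ} (f : X ⟶ Y)
    (m : ℕ) : modM X m ⟶ modM Y m :=
  mappingCone.map _ _ f f (by simp)

namespace AddCommGroup

theorem subsingleton_of_forall_nsmul_surjective (A : Type*) [AddCommGroup A] [Module.Finite ℤ A]
    (h : ∀ m : ℕ, 0 < m → ∀ a : A, ∃ b, m • b = a) : Subsingleton A := by
  -- Nakayama for the ideal `(2)` gives an odd `r` with `r • A = 0`, while `A = |r| • A`.
  obtain ⟨r, hr1, hr⟩ := Submodule.exists_sub_one_mem_and_smul_eq_zero_of_fg_of_le_smul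
    (Ideal.span {(2 : ℤ)}) (⊤ : Submodule ℤ A) Module.Finite.fg_top fun a _ => by
      obtain ⟨b, rfl⟩ := h 2 two_pos a
      rw [← natCast_zsmul]
      exact Submodule.smul_mem_smul (Ideal.mem_span_singleton_self _) Submodule.mem_top
  have hr0 : r ≠ 0 := by
    rintro rfl
    obtain ⟨k, hk⟩ := Ideal.mem_span_singleton'.mp hr1
    omega
  refine subsingleton_of_forall_eq 0 fun a => ?_
  obtain ⟨b, rfl⟩ := h r.natAbs (Int.natAbs_pos.mpr hr0) a
  rw [← natCast_zsmul]
  rcases Int.natAbs_eq r with hr' | hr'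
  · rw [← hr', hr b trivial]
  · rw [← neg_eq_iff_eq_neg.mpr hr', neg_smul, hr b trivial, neg_zero]

end AddCommGroup

namespace AddMonoidHom

variable {A B : Type*} [AddCommGroup A] [AddCommGroup B]

theorem injective_of_forall_ker_le_map_nsmul [Module.Finite ℤ A] (φ : A →+ B)
    (h : ∀ m : ℕ, 0 < m → φ.ker ≤ φ.ker.map (m • AddMonoidHom.id A)) :
    Function.Injective φ := by
  have : Module.Finite ℤ φ.ker :=
    Module.Finite.of_injective φ.ker.subtype.toIntLinearMap Subtype.val_injective
  have : Subsingleton φ.ker := by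
    refine AddCommGroup.subsingleton_of_forall_nsmul_surjective _ fun m hm ⟨a, ha⟩ => ?_
    obtain ⟨b, hb, rfl⟩ := h m hm ha
    exact ⟨⟨b, hb⟩, rfl⟩
  exact (injective_iff_map_eq_zero φ).mpr fun a ha =>
    congrArg Subtype.val (Subsingleton.elim (⟨a, ha⟩ : φ.ker) 0)

theorem surjective_of_forall_range_sup_range_nsmul [Module.Finite ℤ B] (φ : A →+ B)
    (h : ∀ m : ℕ, 0 < m → φ.range ⊔ (m • AddMonoidHom.id B).range = ⊤) :
    Function.Surjective φ := by
  have : Module.Finite ℤ (B ⧸ φ.range) :=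
    Module.Finite.of_surjective (QuotientAddGroup.mk' φ.range).toIntLinearMap
      (QuotientAddGroup.mk'_surjective _)
  have : Subsingleton (B ⧸ φ.range) := by
    refine AddCommGroup.subsingleton_of_forall_nsmul_surjective _ fun m hm q => ?_
    obtain ⟨b, rfl⟩ := QuotientAddGroup.mk'_surjective φ.range q
    obtain ⟨_, ⟨a, rfl⟩, _, ⟨c, rfl⟩, rfl⟩ :=
      AddSubgroup.mem_sup.mp (h m hm ▸ AddSubgroup.mem_top b)
    refine ⟨c, ?_⟩
    simp
  intro b
  simpa using (QuotientAddGroup.eq_zero_iff (N := φ.range) b).mp (Subsingleton.elim _ 0)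

section FourLemma

variable {M₁ M₂ M₃ M₄ N₁ N₂ N₃ N₄ : Type*}
  [AddCommGroup M₁] [AddCommGroup M₂] [AddCommGroup M₃] [AddCommGroup M₄]
  [AddCommGroup N₁] [AddCommGroup N₂] [AddCommGroup N₃] [AddCommGroup N₄]
  {f₁ : M₁ →+ M₂} {f₂ : M₂ →+ M₃} {f₃ : M₃ →+ M₄}
  {g₁ : N₁ →+ N₂} {g₂ : N₂ →+ N₃} {g₃ : N₃ →+ N₄}
  {i₁ : M₁ →+ N₁} {i₂ : M₂ →+ N₂} {i₃ : M₃ →+ N₃} {i₄ : M₄ →+ N₄}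

theorem ker_le_map_ker_of_surjective_of_injective
    (hc₁ : g₁.comp i₁ = i₂.comp f₁) (hc₂ : g₂.comp i₂ = i₃.comp f₂)
    (hc₃ : g₃.comp i₃ = i₄.comp f₃)
    (hf₁ : Function.Exact f₁ f₂) (hf₂ : Function.Exact f₂ f₃) (hg₁ : Function.Exact g₁ g₂)
    (hi₁ : Function.Surjective i₁) (hi₄ : Function.Injective i₄) :
    i₃.ker ≤ i₂.ker.map f₂ := by
  intro y hy
  rw [mem_ker] at hy
  obtain ⟨x, rfl⟩ : y ∈ Set.range f₂ := (hf₂ y).mp <| (map_eq_zero_iff i₄ hi₄).mp <| by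
    rw [← comp_apply i₄, ← hc₃, comp_apply, hy, map_zero]
  obtain ⟨z, hz⟩ : i₂ x ∈ Set.range g₁ := (hg₁ _).mp <| by
    rw [← comp_apply g₂, hc₂, comp_apply, hy]
  obtain ⟨w, rfl⟩ := hi₁ z
  refine ⟨x - f₁ w, ?_, by rw [map_sub, hf₁.apply_apply_eq_zero, sub_zero]⟩
  show i₂ (x - f₁ w) = 0
  rw [map_sub, ← comp_apply i₂, ← hc₁, comp_apply, hz, sub_self]

theorem range_sup_range_eq_top_of_surjective_of_injective
    (hc₂ : g₂.comp i₂ = i₃.comp f₂) (hc₃ : g₃.comp i₃ = i₄.comp f₃)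
    (hf₂ : Function.Exact f₂ f₃) (hg₁ : Function.Exact g₁ g₂) (hg₂ : Function.Exact g₂ g₃)
    (hi₃ : Function.Surjective i₃) (hi₄ : Function.Injective i₄) :
    i₂.range ⊔ g₁.range = ⊤ := by
  refine eq_top_iff.mpr fun y _ => ?_
  obtain ⟨z, hz⟩ := hi₃ (g₂ y)
  obtain ⟨x, rfl⟩ : z ∈ Set.range f₂ := (hf₂ z).mp <| (map_eq_zero_iff i₄ hi₄).mp <| by
    rw [← comp_apply i₄, ← hc₃, comp_apply, hz, hg₂.apply_apply_eq_zero]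
  obtain ⟨w, hw⟩ : y - i₂ x ∈ Set.range g₁ := (hg₁ _).mp <| by
    rw [map_sub, ← comp_apply g₂, hc₂, comp_apply, hz, sub_self]
  exact AddSubgroup.mem_sup.mpr ⟨i₂ x, ⟨x, rfl⟩, g₁ w, ⟨w, rfl⟩, by
    rw [hw, add_sub_cancel]⟩

end FourLemma

end AddMonoidHom

namespace CategoryTheory.Functor

open Limits Pretriangulated

variable {C : Type*} [Category* C] [HasShift C ℤ] (F : C ⥤ AddCommGrpCat) [F.ShiftSequence ℤ]
  {T T' : Triangle C} (φ : T ⟶ T')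

theorem shift_map_comm₁ (n : ℤ) :
    ((F.shift n).map T'.mor₁).hom.comp ((F.shift n).map φ.hom₁).hom =
      ((F.shift n).map φ.hom₂).hom.comp ((F.shift n).map T.mor₁).hom := by
  simp only [← AddCommGrpCat.hom_comp, ← Functor.map_comp, φ.comm₁]

theorem shift_map_comm₂ (n : ℤ) :
    ((F.shift n).map T'.mor₂).hom.comp ((F.shift n).map φ.hom₂).hom =
      ((F.shift n).map φ.hom₃).hom.comp ((F.shift n).map T.mor₂).hom := by
  simp only [← AddCommGrpCat.hom_comp, ← Functor.map_comp, φ.comm₂]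

theorem homologySequenceδ_comm (n₀ n₁ : ℤ) (h : n₀ + 1 = n₁) :
    (F.homologySequenceδ T' n₀ n₁ h).hom.comp ((F.shift n₀).map φ.hom₃).hom =
      ((F.shift n₁).map φ.hom₁).hom.comp (F.homologySequenceδ T n₀ n₁ h).hom := by
  simp only [← AddCommGrpCat.hom_comp, F.homologySequenceδ_naturality]

variable [HasZeroObject C] [Preadditive C] [∀ n : ℤ, (CategoryTheory.shiftFunctor C n).Additive]
  [Pretriangulated C] [F.IsHomological] (hT : T ∈ distTriang C) (hT' : T' ∈ distTriang C)

section

include hT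

theorem homologySequence_function_exact₂ (n : ℤ) :
    Function.Exact ((F.shift n).map T.mor₁) ((F.shift n).map T.mor₂) :=
  (ShortComplex.ab_exact_iff_function_exact _).mp (F.homologySequence_exact₂ T hT n)

theorem homologySequence_function_exact₃ (n₀ n₁ : ℤ) (h : n₀ + 1 = n₁) :
    Function.Exact ((F.shift n₀).map T.mor₂) (F.homologySequenceδ T n₀ n₁ h) :=
  (ShortComplex.ab_exact_iff_function_exact _).mp (F.homologySequence_exact₃ T hT n₀ n₁ h)

theorem homologySequence_function_exact₁ (n₀ n₁ : ℤ) (h : n₀ + 1 = n₁) :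
    Function.Exact (F.homologySequenceδ T n₀ n₁ h) ((F.shift n₁).map T.mor₁) :=
  (ShortComplex.ab_exact_iff_function_exact _).mp (F.homologySequence_exact₁ T hT n₀ n₁ h)

end

include hT hT'

theorem bijective_shift_map_hom₃ (h₁ : ∀ n : ℤ, Function.Bijective ((F.shift n).map φ.hom₁))
    (h₂ : ∀ n : ℤ, Function.Bijective ((F.shift n).map φ.hom₂)) (n : ℤ) :
    Function.Bijective ((F.shift n).map φ.hom₃) :=
  AddMonoidHom.bijective_of_surjective_of_bijective_of_bijective_of_injective _ _ _ _ _ _ _ _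
    _ _ _ _ _ (F.shift_map_comm₁ φ n) (F.shift_map_comm₂ φ n) (F.homologySequenceδ_comm φ n _ rfl)
    (F.shift_map_comm₁ φ (n + 1)) (F.homologySequence_function_exact₂ hT n)
    (F.homologySequence_function_exact₃ hT n _ rfl) (F.homologySequence_function_exact₁ hT n _ rfl)
    (F.homologySequence_function_exact₂ hT' n) (F.homologySequence_function_exact₃ hT' n _ rfl)
    (F.homologySequence_function_exact₁ hT' n _ rfl) (h₁ n).2 (h₂ n) (h₁ (n + 1)) (h₂ (n + 1)).1

theorem ker_shift_map_hom₂_le (n₀ n₁ : ℤ) (h : n₀ + 1 = n₁)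
    (h₀ : Function.Surjective ((F.shift n₀).map φ.hom₃))
    (h₁ : Function.Injective ((F.shift n₁).map φ.hom₃)) :
    ((F.shift n₁).map φ.hom₂).hom.ker ≤
      ((F.shift n₁).map φ.hom₁).hom.ker.map ((F.shift n₁).map T.mor₁).hom :=
  AddMonoidHom.ker_le_map_ker_of_surjective_of_injective (F.homologySequenceδ_comm φ n₀ n₁ h)
    (F.shift_map_comm₁ φ n₁) (F.shift_map_comm₂ φ n₁)
    (F.homologySequence_function_exact₁ hT n₀ n₁ h) (F.homologySequence_function_exact₂ hT n₁)
    (F.homologySequence_function_exact₁ hT' n₀ n₁ h) h₀ h₁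

theorem range_shift_map_hom₂_sup_eq_top (n₀ n₁ : ℤ) (h : n₀ + 1 = n₁)
    (h₀ : Function.Surjective ((F.shift n₀).map φ.hom₃))
    (h₁ : Function.Injective ((F.shift n₁).map φ.hom₁)) :
    ((F.shift n₀).map φ.hom₂).hom.range ⊔ ((F.shift n₀).map T'.mor₁).hom.range = ⊤ :=
  AddMonoidHom.range_sup_range_eq_top_of_surjective_of_injective (F.shift_map_comm₂ φ n₀)
    (F.homologySequenceδ_comm φ n₀ n₁ h) (F.homologySequence_function_exact₃ hT n₀ n₁ h)
    (F.homologySequence_function_exact₂ hT' n₀) (F.homologySequence_function_exact₃ hT' n₀ n₁ h)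
    h₀ h₁

end CategoryTheory.Functor

open HomotopyCategory

local notation "Q" => HomotopyCategory.quotient AddCommGrpCat (ComplexShape.up ℤ)
local notation "H" => HomotopyCategory.homologyFunctor AddCommGrpCat (ComplexShape.up ℤ) 0

theorem quasiIso_iff_bijective_homology {X Y : CochainComplex AddCommGrpCat ℤ} (f : X ⟶ Y) :
    QuasiIso f ↔ ∀ n : ℤ, Function.Bijective (((H).shift n).map ((Q).map f)) := by
  simp only [quasiIso_iff, quasiIsoAt_iff_isIso_homologyMap]
  refine forall_congr' fun n => ?_
  rw [← ConcreteCategory.isIso_iff_bijective]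
  exact (NatIso.isIso_map_iff (homologyFunctorFactors _ _ n) f).symm

noncomputable def modMTriangle (X : CochainComplex AddCommGrpCat ℤ) (m : ℕ) :
    Pretriangulated.Triangle (HomotopyCategory AddCommGrpCat (ComplexShape.up ℤ)) :=
  mappingCone.triangleh ((m : ℤ) • 𝟙 X)

theorem modMTriangle_distinguished (X : CochainComplex AddCommGrpCat ℤ) (m : ℕ) :
    modMTriangle X m ∈ distTriang _ :=
  mappingCone_triangleh_distinguished _

noncomputable def modMTriangleMap {X Y : CochainComplex AddCommGrpCat ℤ} (f : X ⟶ Y) (m : ℕ) :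
    modMTriangle X m ⟶ modMTriangle Y m :=
  (Q).mapTriangle.map (mappingCone.triangleMap _ _ f f (by simp))

theorem shift_map_modMTriangle_mor₁ (X : CochainComplex AddCommGrpCat ℤ) (m : ℕ) (n : ℤ) :
    (((H).shift n).map (modMTriangle X m).mor₁).hom = m • AddMonoidHom.id _ := by
  ext x
  change (((H).shift n).map ((Q).map ((m : ℤ) • 𝟙 X))) x = _
  simp only [natCast_zsmul, Functor.map_smul, CategoryTheory.Functor.map_id,
    AddCommGrpCat.hom_nsmul, AddCommGrpCat.hom_id]
  rfl

theorem finite_homology (X : CochainComplex AddCommGrpCat ℤ) (n : ℤ) [Module.Finite ℤ (X.X n)] :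
    Module.Finite ℤ (((H).shift n).obj ((Q).obj X)) := by
  have : Module.Finite ℤ (X.cycles n) := Module.Finite.of_injective (X.iCycles n).hom.toIntLinearMap
    ((AddCommGrpCat.mono_iff_injective _).mp inferInstance)
  have : Module.Finite ℤ
      ((HomologicalComplex.homologyFunctor AddCommGrpCat (ComplexShape.up ℤ) n).obj X) :=
    Module.Finite.of_surjective (X.homologyπ n).hom.toIntLinearMap
      ((AddCommGrpCat.epi_iff_surjective _).mp inferInstance)
  exact Module.Finite.equiv
    ((homologyFunctorFactors _ _ n).app X).addCommGroupIsoToAddEquiv.symm.toIntLinearEquiv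

theorem quasiIso_iff_quasiIso_modM_general
    (X Y : CochainComplex AddCommGrpCat ℤ) (f : X ⟶ Y)
    (hXfg : ∀ n, Module.Finite ℤ (X.X n))
    (hYfg : ∀ n, Module.Finite ℤ (Y.X n)) :
    QuasiIso f ↔ ∀ m : ℕ, 0 < m → QuasiIso (modMMap f m) := by
  simp only [quasiIso_iff_bijective_homology]
  refine ⟨fun hf m _ => Functor.bijective_shift_map_hom₃ _ (modMTriangleMap f m)
    (modMTriangle_distinguished X m) (modMTriangle_distinguished Y m) hf hf, fun hmod => ?_⟩
  have hinj (n : ℤ) : Function.Injective (((H).shift n).map ((Q).map f)) := by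
    have := finite_homology X n
    refine AddMonoidHom.injective_of_forall_ker_le_map_nsmul _ fun m hm => ?_
    have := Functor.ker_shift_map_hom₂_le _ (modMTriangleMap f m) (modMTriangle_distinguished X m)
      (modMTriangle_distinguished Y m) (n - 1) n (by omega) (hmod m hm _).2 (hmod m hm _).1
    rwa [shift_map_modMTriangle_mor₁] at this
  refine fun n => ⟨hinj n, ?_⟩
  have := finite_homology Y n
  refine AddMonoidHom.surjective_of_forall_range_sup_range_nsmul _ fun m hm => ?_
  have := Functor.range_shift_map_hom₂_sup_eq_top _ (modMTriangleMap f m)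
    (modMTriangle_distinguished X m) (modMTriangle_distinguished Y m) n (n + 1) rfl
    (hmod m hm n).2 (hinj (n + 1))
  rwa [shift_map_modMTriangle_mor₁] at this

theorem quasiIso_iff_quasiIso_modM
    (X Y : CochainComplex AddCommGrpCat ℤ) (f : X ⟶ Y)
    -- `X` and `Y` are bounded complexes of finitely generated free abelian groups
    (hXb : ∃ a b : ℤ, ∀ n, (n < a ∨ b < n) → Subsingleton (X.X n))
    (hYb : ∃ a b : ℤ, ∀ n, (n < a ∨ b < n) → Subsingleton (Y.X n))
    (hXfree : ∀ n, Module.Free ℤ (X.X n)) (hXfg : ∀ n, Module.Finite ℤ (X.X n))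
    (hYfree : ∀ n, Module.Free ℤ (Y.X n)) (hYfg : ∀ n, Module.Finite ℤ (Y.X n)) :
    QuasiIso f ↔ ∀ m : ℕ, 0 < m → QuasiIso (modMMap f m) :=
  quasiIso_iff_quasiIso_modM_general X Y f hXfg hYfg
end

section
/- For perfect complexes of abelian groups X and Y, the canonical map i(RHom(X, Y)) → R\underline{Hom}(iX, iY) from the discrete derived Hom to the internal Hom in the derived category of locally compact abelian groups of finite ranks is an equivalence. -/
/-!
STATEMENT 13: For perfect complexes of abelian groups `X` and `Y`, the
canonical map `i(RHom(X, Y)) → R𝐻𝑜𝑚(iX, iY)` from the (discrete) derived Hom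
to the internal Hom in the derived category of locally compact abelian groups
is an equivalence.

We take `X` a bounded complex of finitely generated free abelian groups and
`Y` a bounded complex of finitely generated abelian groups (every perfect
complex is quasi-isomorphic to such).  Since `X` has (codivisible, discrete)
projective terms, the internal Hom `R𝐻𝑜𝑚(iX, iY)` is computed as the total
Hom-complex `𝐻𝑜𝑚^•(iX, I)` for any strict quasi-isomorphism `iY → I` with `I`
a bounded complex of divisible locally compact abelian groups (e.g.
`I = Tot[Y ⊗ ℝ → Y ⊗ ℝ/ℤ]`); as `X` is degreewise discrete, continuous
homomorphisms out of `X` are just homomorphisms.  The statement: the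
postcomposition map `Hom^•(X, Y) → Hom^•(iX, I)` is a quasi-isomorphism.
-/

section Machinery

/-- Transport along an equality of indices. -/
def castGrpHom {F : ℤ → Type} [∀ i, AddCommGroup (F i)] {a b : ℤ} (h : a = b) :
    F a →+ F b := by subst h; exact AddMonoidHom.id _

variable {F G : ℤ → Type} [∀ i, AddCommGroup (F i)] [∀ i, AddCommGroup (G i)]

/-- The degree `n` cohomology `Ker(d^n)/Im(d^{n-1})` of a `ℤ`-indexed complex. -/
def Hdeg (d : ∀ n : ℤ, F n →+ F (n + 1)) (n : ℤ) : Type :=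
  (d n).ker ⧸ ((((castGrpHom (F := F) (show n - 1 + 1 = n by omega)).comp
    (d (n - 1))).range).addSubgroupOf (d n).ker)

noncomputable instance (d : ∀ n : ℤ, F n →+ F (n + 1)) (n : ℤ) :
    AddCommGroup (Hdeg d n) := by unfold Hdeg; infer_instance

/-- The map induced on degree `n` cohomology by a chain map. -/
noncomputable def HdegMap (d : ∀ n : ℤ, F n →+ F (n + 1))
    (d' : ∀ n : ℤ, G n →+ G (n + 1)) (f : ∀ n, F n →+ G n)
    (hf : ∀ n x, f (n + 1) (d n x) = d' n (f n x)) (n : ℤ) :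
    Hdeg d n → Hdeg d' n := by
  have cast_nat : ∀ {a b : ℤ} (h : a = b) (x : F a),
      f b (castGrpHom (F := F) h x) = castGrpHom (F := G) h (f a x) := by
    intro a b h x; subst h; rfl
  refine Quotient.map' (fun x => ⟨f n x.1, ?_⟩) ?_
  · have : (d' n) (f n x.1) = f (n + 1) (d n x.1) := (hf n x.1).symm
    simp only [AddMonoidHom.mem_ker, this]
    rw [show (d n) x.1 = 0 from x.2, map_zero]
  · rintro ⟨b, hb⟩ ⟨b', hb'⟩ hrel
    have hmem := QuotientAddGroup.leftRel_apply.mp hrel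
    apply QuotientAddGroup.leftRel_apply.mpr
    obtain ⟨a, ha⟩ := (AddSubgroup.mem_addSubgroupOf).mp hmem
    apply AddSubgroup.mem_addSubgroupOf.mpr
    refine ⟨f (n - 1) a, ?_⟩
    have h2 := congrArg (f n) ha
    simp only [AddMonoidHom.comp_apply, cast_nat, hf, AddSubgroup.coe_add,
      AddSubgroup.coe_neg, map_add, map_neg] at h2 ⊢
    exact h2

end Machinery

section HomComplexes

variable (X Y : ℤ → Type) [∀ i, AddCommGroup (X i)] [∀ i, AddCommGroup (Y i)]

/-- The degree `n` term `∏ᵢ Hom(Xⁱ, Y^{i+n})` of the Hom-complex. -/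
abbrev HomT (n : ℤ) : Type := ∀ i : ℤ, X i →+ Y (i + n)

variable (dX : ∀ i : ℤ, X i →+ X (i + 1)) (dY : ∀ i : ℤ, Y i →+ Y (i + 1))

/-- The differential of the Hom-complex:
`(Dφ)ᵢ = d_Y ∘ φᵢ − (−1)ⁿ φ_{i+1} ∘ d_X`. -/
noncomputable def HomD (n : ℤ) : HomT X Y n →+ HomT X Y (n + 1) :=
  AddMonoidHom.mk'
    (fun φ i =>
      (castGrpHom (F := Y) (show i + n + 1 = i + (n + 1) by omega)).comp
        ((dY (i + n)).comp (φ i)) -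
      (n.negOnePow : ℤ) •
        ((castGrpHom (F := Y) (show i + 1 + n = i + (n + 1) by omega)).comp
          ((φ (i + 1)).comp (dX i))))
    (by
      intro φ ψ
      funext i
      ext x
      simp only [AddMonoidHom.sub_apply, AddMonoidHom.comp_apply,
        AddMonoidHom.add_apply, Pi.add_apply, map_add, smul_add,
        AddMonoidHom.smul_apply]
      abel)

end HomComplexes

/-!
Since `X` is a bounded complex of free abelian groups, `Hom^•(X, -)` carries the
quasi-isomorphism `ι` to a quasi-isomorphism. A chain map is a quasi-isomorphism exactly when
every cocycle of its mapping cone is a coboundary, and the cone of postcomposition with `ι` is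
`Hom^•(X, cone ι)`. A cocycle `(A, B)` of the latter is written as a coboundary `(u, v)` one
component `Xᵐ` at a time, descending from the top degree of `X`: at each step the remaining
obstruction is a cocycle of `cone ι` depending additively on `x ∈ Xᵐ`, and it lifts because it
lifts on a basis of the free group `Xᵐ`.
-/

section Casts

variable {F G : ℤ → Type} [∀ i, AddCommGroup (F i)] [∀ i, AddCommGroup (G i)]

@[simp] theorem castGrpHom_rfl {a : ℤ} (h : a = a) (x : F a) : castGrpHom (F := F) h x = x := rfl

theorem castGrpHom_castGrpHom {a b c : ℤ} (h : a = b) (h' : b = c) (x : F a) :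
    castGrpHom (F := F) h' (castGrpHom (F := F) h x) = castGrpHom (F := F) (h.trans h') x := by
  subst h h'; rfl

theorem castGrpHom_eq_iff {a b : ℤ} (h : a = b) {x : F a} {y : F b} :
    castGrpHom (F := F) h x = y ↔ x = castGrpHom (F := F) h.symm y := by
  subst h; rfl

theorem map_castGrpHom (t : ∀ i, F i →+ G i) {a b : ℤ} (h : a = b) (x : F a) :
    t b (castGrpHom (F := F) h x) = castGrpHom (F := G) h (t a x) := by
  subst h; rfl

theorem map_castGrpHom_succ (d : ∀ i, F i →+ F (i + 1)) {a b : ℤ} (h : a = b) (x : F a) :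
    d b (castGrpHom (F := F) h x) = castGrpHom (F := F) (congrArg (· + 1) h) (d a x) := by
  subst h; rfl

end Casts

section Cohomology

variable {F G : ℤ → Type} [∀ i, AddCommGroup (F i)] [∀ i, AddCommGroup (G i)]
  {d : ∀ n : ℤ, F n →+ F (n + 1)} {d' : ∀ n : ℤ, G n →+ G (n + 1)}

theorem Hdeg_mk_eq_mk_iff {r n : ℤ} (h : r + 1 = n) (x y : (d n).ker) :
    @Eq (Hdeg d n) (QuotientAddGroup.mk x) (QuotientAddGroup.mk y) ↔
      ∃ a : F r, castGrpHom (F := F) h (d r a) = -x.1 + y.1 := by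
  obtain rfl : r = n - 1 := by omega
  unfold Hdeg
  rw [QuotientAddGroup.eq, AddSubgroup.mem_addSubgroupOf]
  simp [AddMonoidHom.mem_range, AddMonoidHom.comp_apply]

theorem HdegMap_mk (f : ∀ n, F n →+ G n) (hf : ∀ n x, f (n + 1) (d n x) = d' n (f n x))
    {n : ℤ} (x : (d n).ker) (hx : f n x.1 ∈ (d' n).ker) :
    HdegMap d d' f hf n (QuotientAddGroup.mk x) = QuotientAddGroup.mk ⟨f n x.1, hx⟩ :=
  Quotient.map'_mk'' _ _ _

end Cohomology

theorem Module.Basis.ext_addMonoidHom {κ M N : Type*} [AddCommGroup M] [AddCommGroup N]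
    (b : Module.Basis κ ℤ M) {g₁ g₂ : M →+ N} (h : ∀ e, g₁ (b e) = g₂ (b e)) : g₁ = g₂ :=
  AddMonoidHom.toIntLinearMap_injective (b.ext h)

section Cone

variable {F G : ℤ → Type} [∀ i, AddCommGroup (F i)] [∀ i, AddCommGroup (G i)]

/-- The mapping cone of `f` is acyclic: every cocycle `(y, z)` of the cone, i.e. `d y = 0` and
`d' z = f y`, is the coboundary of some `(y', z')`. -/
def ConeExact (d : ∀ n : ℤ, F n →+ F (n + 1)) (d' : ∀ n : ℤ, G n →+ G (n + 1))
    (f : ∀ n, F n →+ G n) : Prop :=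
  ∀ (r s : ℤ) (h : r + 1 = s) (y : F (s + 1)) (z : G s),
    d (s + 1) y = 0 → d' s z = f (s + 1) y →
      ∃ (y' : F s) (z' : G r), d s y' = y ∧ f s y' + castGrpHom (F := G) h (d' r z') = z

variable {d : ∀ n : ℤ, F n →+ F (n + 1)} {d' : ∀ n : ℤ, G n →+ G (n + 1)}
  {f : ∀ n, F n →+ G n}

theorem coneExact_of_bijective_HdegMap (hf : ∀ n x, f (n + 1) (d n x) = d' n (f n x))
    (hbij : ∀ n, Function.Bijective (HdegMap d d' f hf n)) : ConeExact d d' f := by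
  intro r s h y z hy hz
  have hfk : ∀ c : (d s).ker, f s c.1 ∈ (d' s).ker := fun c => by
    rw [AddMonoidHom.mem_ker, ← hf, c.2, map_zero]
  -- the class of `y` is killed by `f`, hence vanishes: `y = d w`
  obtain ⟨w, hw⟩ : ∃ w : F s, d s w = y := by
    have hzero := (hbij (s + 1)).1 (a₁ := QuotientAddGroup.mk ⟨y, hy⟩)
      (a₂ := QuotientAddGroup.mk 0) <| by
      rw [HdegMap_mk (hx := by rw [AddMonoidHom.mem_ker, ← hf, hy, map_zero]),
        HdegMap_mk (hx := by simp), Hdeg_mk_eq_mk_iff rfl]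
      exact ⟨-z, by simp [hz]⟩
    obtain ⟨w, hw⟩ := (Hdeg_mk_eq_mk_iff rfl _ _).1 hzero
    exact ⟨-w, by rw [map_neg, neg_eq_iff_eq_neg]; simpa using hw⟩
  -- `z - f w` is a cocycle, hence cohomologous to `f c` for a cocycle `c`
  have hzw : z - f s w ∈ (d' s).ker := by
    rw [AddMonoidHom.mem_ker, map_sub, hz, ← hf, hw, sub_self]
  obtain ⟨c, hc⟩ := (hbij s).2 (QuotientAddGroup.mk ⟨z - f s w, hzw⟩)
  obtain ⟨c, rfl⟩ := QuotientAddGroup.mk_surjective c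
  rw [HdegMap_mk (hx := hfk c), Hdeg_mk_eq_mk_iff h] at hc
  obtain ⟨a, ha⟩ := hc
  refine ⟨w + c, a, by rw [map_add, hw, c.2, add_zero], ?_⟩
  rw [map_add, add_assoc, ha]
  simp

theorem bijective_HdegMap_of_coneExact (hf : ∀ n x, f (n + 1) (d n x) = d' n (f n x))
    (hc : ConeExact d d' f) (n : ℤ) : Function.Bijective (HdegMap d d' f hf n) := by
  obtain ⟨s, rfl⟩ : ∃ s, n = s + 1 := ⟨n - 1, by omega⟩
  have hfk : ∀ c : (d (s + 1)).ker, f (s + 1) c.1 ∈ (d' (s + 1)).ker := fun c => by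
    rw [AddMonoidHom.mem_ker, ← hf, c.2, map_zero]
  constructor
  · rintro ⟨ψ₁⟩ ⟨ψ₂⟩ hψ
    change HdegMap d d' f hf (s + 1) (QuotientAddGroup.mk ψ₁) =
      HdegMap d d' f hf (s + 1) (QuotientAddGroup.mk ψ₂) at hψ
    rw [HdegMap_mk (hx := hfk ψ₁), HdegMap_mk (hx := hfk ψ₂), Hdeg_mk_eq_mk_iff rfl] at hψ
    obtain ⟨ξ, hξ⟩ := hψ
    obtain ⟨y', -, hy', -⟩ := hc (s - 1) s (by omega) (-ψ₁.1 + ψ₂.1) ξ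
      (by rw [map_add, map_neg, ψ₁.2, ψ₂.2]; simp)
      (by rw [map_add, map_neg]; simpa using hξ)
    exact (Hdeg_mk_eq_mk_iff rfl _ _).2 ⟨y', by simpa using hy'⟩
  · rintro ⟨B⟩
    obtain ⟨u, v, hu, huv⟩ := hc s (s + 1) rfl 0 B (map_zero _) (by rw [map_zero]; exact B.2)
    refine ⟨QuotientAddGroup.mk ⟨u, hu⟩, ?_⟩
    rw [HdegMap_mk (hx := hfk ⟨u, hu⟩)]
    exact (Hdeg_mk_eq_mk_iff rfl _ _).2 ⟨v, by simp [← huv]⟩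

theorem ConeExact.exists_addMonoidHom (hc : ConeExact d d' f) {P : Type*} [AddCommGroup P]
    [Module.Free ℤ P] {r s : ℤ} (h : r + 1 = s) (y : P →+ F (s + 1)) (z : P →+ G s)
    (hy : ∀ p, d (s + 1) (y p) = 0) (hz : ∀ p, d' s (z p) = f (s + 1) (y p)) :
    ∃ (y' : P →+ F s) (z' : P →+ G r), ∀ p,
      d s (y' p) = y p ∧ f s (y' p) + castGrpHom (F := G) h (d' r (z' p)) = z p := by
  let b := Module.Free.chooseBasis ℤ P
  choose y' z' hy' hz' using fun e => hc r s h (y (b e)) (z (b e)) (hy _) (hz _)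
  have h₁ : (d s).comp (b.constr ℤ y').toAddMonoidHom = y :=
    b.ext_addMonoidHom fun e => by simpa using hy' e
  have h₂ : (f s).comp (b.constr ℤ y').toAddMonoidHom +
      (castGrpHom (F := G) h).comp ((d' r).comp (b.constr ℤ z').toAddMonoidHom) = z :=
    b.ext_addMonoidHom fun e => by simpa using hz' e
  exact ⟨_, _, fun p => ⟨DFunLike.congr_fun h₁ p, DFunLike.congr_fun h₂ p⟩⟩

end Cone

section HomComplex

variable {X Y I : ℤ → Type} [∀ i, AddCommGroup (X i)] [∀ i, AddCommGroup (Y i)]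
  [∀ i, AddCommGroup (I i)]

def postcomp (ι : ∀ i, Y i →+ I i) (n : ℤ) : HomT X Y n →+ HomT X I n :=
  AddMonoidHom.mk' (fun ψ j => (ι (j + n)).comp (ψ j)) fun _ _ => by ext; simp

theorem postcomp_apply (ι : ∀ i, Y i →+ I i) (n : ℤ) (ψ : HomT X Y n) (i : ℤ) (x : X i) :
    postcomp ι n ψ i x = ι (i + n) (ψ i x) := rfl

variable {dX : ∀ i : ℤ, X i →+ X (i + 1)} {dY : ∀ i : ℤ, Y i →+ Y (i + 1)}
  {dI : ∀ i : ℤ, I i →+ I (i + 1)} {ι : ∀ i, Y i →+ I i}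

theorem HomD_apply (n : ℤ) (φ : HomT X Y n) (i : ℤ) (x : X i) :
    HomD X Y dX dY n φ i x =
      castGrpHom (F := Y) (show i + n + 1 = i + (n + 1) by omega) (dY (i + n) (φ i x)) -
        (n.negOnePow : ℤ) •
          castGrpHom (F := Y) (show i + 1 + n = i + (n + 1) by omega) (φ (i + 1) (dX i x)) :=
  rfl

theorem HomD_update_of_ne {n m i : ℤ} (φ : HomT X Y n) (w : X m →+ Y (m + n)) (hi : i ≠ m)
    (hi' : i + 1 ≠ m) : HomD X Y dX dY n (Function.update φ m w) i = HomD X Y dX dY n φ i := by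
  ext x
  simp only [HomD_apply, Function.update_of_ne hi, Function.update_of_ne hi']

variable (dX dY dI ι) in
/-- In the component at `Xⁱ`, `(u, v)` is a primitive of the cocycle `(A, B)` of the cone of
`postcomp ι`. -/
def IsPrimitiveAt {n : ℤ} (A : HomT X Y (n + 1 + 1)) (B : HomT X I (n + 1))
    (u : HomT X Y (n + 1)) (v : HomT X I n) (i : ℤ) : Prop :=
  HomD X Y dX dY (n + 1) u i = A i ∧ (postcomp ι (n + 1) u + HomD X I dX dI n v) i = B i

theorem isPrimitiveAt_of_subsingleton {n i : ℤ} [Subsingleton (X i)] (A : HomT X Y (n + 1 + 1))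
    (B : HomT X I (n + 1)) (u : HomT X Y (n + 1)) (v : HomT X I n) :
    IsPrimitiveAt dX dY dI ι A B u v i :=
  ⟨Subsingleton.elim _ _, Subsingleton.elim _ _⟩

theorem IsPrimitiveAt.update {n m i : ℤ} {A : HomT X Y (n + 1 + 1)} {B : HomT X I (n + 1)}
    {u : HomT X Y (n + 1)} {v : HomT X I n} (h : IsPrimitiveAt dX dY dI ι A B u v i)
    (w : X m →+ Y (m + (n + 1))) (z : X m →+ I (m + n)) (hi : i ≠ m) (hi' : i + 1 ≠ m) :
    IsPrimitiveAt dX dY dI ι A B (Function.update u m w) (Function.update v m z) i := by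
  refine ⟨(HomD_update_of_ne u w hi hi').trans h.1, ?_⟩
  rw [Pi.add_apply, HomD_update_of_ne v z hi hi']
  simpa only [postcomp, AddMonoidHom.mk'_apply, Pi.add_apply, Function.update_of_ne hi] using h.2

theorem d_apply_eq_of_HomD_eq {k m : ℤ} {φ : HomT X Y k} {ψ : X m →+ Y (m + (k + 1))}
    (h : HomD X Y dX dY k φ m = ψ) (x : X m) :
    dY (m + k) (φ m x) =
      castGrpHom (F := Y) (show m + (k + 1) = m + k + 1 by omega) (ψ x) + (k.negOnePow : ℤ) •
        castGrpHom (F := Y) (show m + 1 + k = m + k + 1 by omega) (φ (m + 1) (dX m x)) := by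
  have hx := DFunLike.congr_fun h x
  rw [HomD_apply, sub_eq_iff_eq_add, castGrpHom_eq_iff] at hx
  rw [hx, map_add, map_zsmul, castGrpHom_castGrpHom]

variable (dX) in
/-- Together with `residualI`: the cocycle of the cone of `ι`, parametrised by `Xᵐ`, of which
`(u m, v m)` has to be a primitive once `u (m + 1)` and `v (m + 1)` are fixed. -/
def residualY {n : ℤ} (A : HomT X Y (n + 1 + 1)) (u : HomT X Y (n + 1)) (m : ℤ) :
    X m →+ Y (m + (n + 1) + 1) :=
  (castGrpHom (F := Y) (show m + (n + 1 + 1) = m + (n + 1) + 1 by omega)).comp (A m) +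
    ((n + 1).negOnePow : ℤ) •
      (castGrpHom (F := Y) (show m + 1 + (n + 1) = m + (n + 1) + 1 by omega)).comp
        ((u (m + 1)).comp (dX m))

variable (dX) in
def residualI {n : ℤ} (B : HomT X I (n + 1)) (v : HomT X I n) (m : ℤ) : X m →+ I (m + (n + 1)) :=
  B m + (n.negOnePow : ℤ) •
    (castGrpHom (F := I) (show m + 1 + n = m + (n + 1) by omega)).comp ((v (m + 1)).comp (dX m))

theorem dY_residualY (hXc : ∀ i x, dX (i + 1) (dX i x) = 0) {n m : ℤ}
    {A : HomT X Y (n + 1 + 1)} (hA : HomD X Y dX dY (n + 1 + 1) A = 0) {u : HomT X Y (n + 1)}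
    (hu : HomD X Y dX dY (n + 1) u (m + 1) = A (m + 1)) (x : X m) :
    dY (m + (n + 1) + 1) (residualY dX A u m x) = 0 := by
  have hdA := d_apply_eq_of_HomD_eq (congrFun hA m) x
  rw [Pi.zero_apply, AddMonoidHom.zero_apply, map_zero, zero_add] at hdA
  simp only [residualY, AddMonoidHom.add_apply, AddMonoidHom.smul_apply,
    AddMonoidHom.comp_apply]
  rw [map_add, map_zsmul, map_castGrpHom_succ, map_castGrpHom_succ, hdA,
    d_apply_eq_of_HomD_eq hu, hXc, map_zero, map_zero, smul_zero, add_zero, map_zsmul,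
    castGrpHom_castGrpHom, castGrpHom_castGrpHom, Int.negOnePow_succ, Units.val_neg, neg_smul]
  exact neg_add_cancel _

theorem dI_residualI (hXc : ∀ i x, dX (i + 1) (dX i x) = 0) {n m : ℤ}
    {A : HomT X Y (n + 1 + 1)} {B : HomT X I (n + 1)}
    (hB : HomD X I dX dI (n + 1) B = postcomp ι _ A) {u : HomT X Y (n + 1)} {v : HomT X I n}
    (huv : (postcomp ι (n + 1) u + HomD X I dX dI n v) (m + 1) = B (m + 1)) (x : X m) :
    dI (m + (n + 1)) (residualI dX B v m x) = ι (m + (n + 1) + 1) (residualY dX A u m x) := by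
  rw [Pi.add_apply] at huv
  simp only [residualI, residualY, AddMonoidHom.add_apply, AddMonoidHom.smul_apply,
    AddMonoidHom.comp_apply]
  rw [map_add, map_zsmul, d_apply_eq_of_HomD_eq (congrFun hB m), map_castGrpHom_succ,
    d_apply_eq_of_HomD_eq (eq_sub_of_add_eq' huv), hXc, map_zero, map_zero, smul_zero,
    add_zero, AddMonoidHom.sub_apply, postcomp_apply, postcomp_apply, castGrpHom_castGrpHom,
    map_add, map_zsmul, map_castGrpHom ι, map_castGrpHom ι, map_sub, smul_sub,
    show ((n + 1).negOnePow : ℤ) = -n.negOnePow by rw [Int.negOnePow_succ, Units.val_neg],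
    neg_smul, neg_smul]
  abel

theorem exists_isPrimitiveAt_update (hc : ConeExact dY dI ι)
    (hXc : ∀ i x, dX (i + 1) (dX i x) = 0) {n m : ℤ} [Module.Free ℤ (X m)]
    {A : HomT X Y (n + 1 + 1)} {B : HomT X I (n + 1)}
    (hA : HomD X Y dX dY (n + 1 + 1) A = 0) (hB : HomD X I dX dI (n + 1) B = postcomp ι _ A)
    {u : HomT X Y (n + 1)} {v : HomT X I n} (h : IsPrimitiveAt dX dY dI ι A B u v (m + 1)) :
    ∃ (w : X m →+ Y (m + (n + 1))) (z : X m →+ I (m + n)),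
      IsPrimitiveAt dX dY dI ι A B (Function.update u m w) (Function.update v m z) m := by
  have hm : m + 1 ≠ m := by omega
  obtain ⟨w, z, hwz⟩ := hc.exists_addMonoidHom (show m + n + 1 = m + (n + 1) by omega)
    (residualY dX A u m) (residualI dX B v m) (dY_residualY hXc hA h.1) (dI_residualI hXc hB h.2)
  refine ⟨w, z, ?_, ?_⟩
  · ext x
    rw [HomD_apply, Function.update_self, Function.update_of_ne hm, (hwz x).1]
    simp only [residualY, AddMonoidHom.add_apply, AddMonoidHom.smul_apply,
      AddMonoidHom.comp_apply]
    rw [map_add, map_zsmul, castGrpHom_castGrpHom, castGrpHom_castGrpHom, castGrpHom_rfl]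
    exact add_sub_cancel_right _ _
  · ext x
    rw [Pi.add_apply, AddMonoidHom.add_apply, postcomp_apply, HomD_apply, Function.update_self,
      Function.update_self, Function.update_of_ne hm, ← add_sub_assoc, (hwz x).2]
    exact add_sub_cancel_right _ _

theorem exists_isPrimitiveAt_of_sub_lt (hc : ConeExact dY dI ι)
    (hXc : ∀ i x, dX (i + 1) (dX i x) = 0) (hXfree : ∀ i, Module.Free ℤ (X i)) {b : ℤ}
    (hb : ∀ i, b < i → Subsingleton (X i)) {n : ℤ} {A : HomT X Y (n + 1 + 1)}
    {B : HomT X I (n + 1)} (hA : HomD X Y dX dY (n + 1 + 1) A = 0)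
    (hB : HomD X I dX dI (n + 1) B = postcomp ι _ A) (k : ℕ) :
    ∃ u v, ∀ i, b - k < i → IsPrimitiveAt dX dY dI ι A B u v i := by
  induction k with
  | zero =>
    refine ⟨0, 0, fun i hi => ?_⟩
    have := hb i (by simpa using hi)
    exact isPrimitiveAt_of_subsingleton _ _ _ _
  | succ k ih =>
    obtain ⟨u, v, huv⟩ := ih
    obtain ⟨w, z, hwz⟩ := exists_isPrimitiveAt_update (m := b - k) hc hXc hA hB
      (huv _ (by omega))
    refine ⟨Function.update u (b - k) w, Function.update v (b - k) z, fun i hi => ?_⟩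
    obtain rfl | hi : i = b - k ∨ b - k < i := by push_cast at hi; omega
    · exact hwz
    · exact (huv i hi).update w z (by omega) (by omega)

theorem coneExact_postcomp (hc : ConeExact dY dI ι) (hXc : ∀ i x, dX (i + 1) (dX i x) = 0)
    (hXb : ∃ a b : ℤ, ∀ i, (i < a ∨ b < i) → Subsingleton (X i))
    (hXfree : ∀ i, Module.Free ℤ (X i)) :
    ConeExact (HomD X Y dX dY) (HomD X I dX dI) (postcomp ι) := by
  intro n s hs A B hA hB
  subst hs
  obtain ⟨a, b, hab⟩ := hXb
  obtain ⟨u, v, huv⟩ := exists_isPrimitiveAt_of_sub_lt hc hXc hXfree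
    (fun i hi => hab i (.inr hi)) hA hB (b + 1 - a).toNat
  have huv' : ∀ i, IsPrimitiveAt dX dY dI ι A B u v i := fun i => by
    by_cases hi : b - (b + 1 - a).toNat < i
    · exact huv i hi
    · have := hab i (.inl (by omega))
      exact isPrimitiveAt_of_subsingleton _ _ _ _
  exact ⟨u, v, funext fun i => (huv' i).1, funext fun i => (huv' i).2⟩

end HomComplex

theorem discrete_rhom_agrees_with_internal_hom
    -- `X`: a bounded complex of finitely generated free abelian groups
    (X : ℤ → Type) [∀ i, AddCommGroup (X i)] (dX : ∀ i : ℤ, X i →+ X (i + 1))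
    (hXc : ∀ i x, dX (i + 1) (dX i x) = 0)
    (hXb : ∃ a b : ℤ, ∀ i, (i < a ∨ b < i) → Subsingleton (X i))
    (hXfree : ∀ i, Module.Free ℤ (X i))
    -- `Y`: a bounded complex of finitely generated abelian groups
    (Y : ℤ → Type) [∀ i, AddCommGroup (Y i)] (dY : ∀ i : ℤ, Y i →+ Y (i + 1))
    -- `I`: a bounded complex of divisible locally compact abelian groups
    (I : ℤ → Type) [∀ i, AddCommGroup (I i)] [∀ i, TopologicalSpace (I i)]
    (dI : ∀ i : ℤ, ContinuousAddMonoidHom (I i) (I (i + 1)))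
    -- `ι : iY → I` a (strict) quasi-isomorphism, exhibiting `I` as a
    -- resolution of `iY` by divisible locally compact groups
    (ι : ∀ i, Y i →+ I i)
    (hιchain : ∀ i y, ι (i + 1) (dY i y) = dI i (ι i y))
    (hιq : ∀ n, Function.Bijective
      (HdegMap dY (fun i => (dI i).toAddMonoidHom) ι hιchain n)) :
    -- the canonical postcomposition map
    -- `Hom^•(X, Y) = i RHom(X,Y) → Hom^•(iX, I) = R𝐻𝑜𝑚(iX, iY)`
    -- is a quasi-isomorphism
    ∀ (hcomm : ∀ (n : ℤ) (φ : HomT X Y n) (i : ℤ),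
        (fun (m : ℤ) (ψ : HomT X Y m) (j : ℤ) => (ι (j + m)).comp (ψ j))
          (n + 1) (HomD X Y dX dY n φ) i =
        HomD X I dX (fun i => (dI i).toAddMonoidHom) n
          ((fun (m : ℤ) (ψ : HomT X Y m) (j : ℤ) => (ι (j + m)).comp (ψ j)) n φ) i),
      ∀ n, Function.Bijective
        (HdegMap (HomD X Y dX dY) (HomD X I dX (fun i => (dI i).toAddMonoidHom))
          (fun m => AddMonoidHom.mk'
            (fun ψ (j : ℤ) => (ι (j + m)).comp (ψ j))
            (by
              intro ψ ψ'
              funext j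
              ext x
              simp [AddMonoidHom.add_apply, Pi.add_apply]))
          (fun n φ => funext fun i => hcomm n φ i) n) := by
  intro hcomm n
  have hcone : ConeExact dY (fun i => (dI i).toAddMonoidHom) ι :=
    coneExact_of_bijective_HdegMap hιchain hιq
  exact bijective_HdegMap_of_coneExact _ (coneExact_postcomp hcone hXc hXb hXfree) n
end

section
/- Every locally compact abelian group A that is an extension of a finitely generated (discrete) abelian group by a finitely generated ℤ_p-module with its p-adic topology is a locally compact abelian group of finite ranks: Hom(ℝ, A) and Hom(A, ℝ) are finite-dimensional real vector spaces, and multiplication by every prime ℓ on A is a strict morphism with finite kernel and finite cokernel. -/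
/-!
STATEMENT 19: Every locally compact abelian group `A` that is an extension of
a finitely generated (discrete) abelian group by a finitely generated
`ℤ_p`-module with its p-adic (compact) topology is a locally compact abelian
group of finite ranks: `Hom(ℝ, A)` and `Hom(A, ℝ)` are finite-dimensional
real vector spaces, and multiplication by every prime `ℓ` on `A` is a strict
morphism with finite kernel and finite cokernel.
-/

section

variable {A B : Type} [AddCommGroup A] [TopologicalSpace A] [IsTopologicalAddGroup A]
  [AddCommGroup B] [TopologicalSpace B] [IsTopologicalAddGroup B]

/-- The canonical morphism `Coim(f) = A/Ker(f) → Im(f) = cl(f(A))`. -/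
noncomputable def coimToIm (f : ContinuousAddMonoidHom A B) :
    (A ⧸ f.toAddMonoidHom.ker) →+ f.toAddMonoidHom.range.topologicalClosure :=
  AddMonoidHom.codRestrict
    (QuotientAddGroup.lift _ f.toAddMonoidHom (fun _ hx => hx)) _ (by
      intro x
      induction x using QuotientAddGroup.induction_on with
      | H a => exact AddSubgroup.le_topologicalClosure _ ⟨a, rfl⟩)

/-- A morphism of locally compact abelian groups is strict if the canonical
map `Coim(f) → Im(f)` is an isomorphism of topological groups. -/
noncomputable def IsStrict (f : ContinuousAddMonoidHom A B) : Prop :=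
  IsHomeomorph (coimToIm f)

/-- Multiplication by a natural number `ℓ`, as a continuous endomorphism. -/
def mulByHom (ℓ : ℕ) : ContinuousAddMonoidHom A A :=
  ⟨ℓ • AddMonoidHom.id A, by
    show Continuous fun a : A => ℓ • a
    exact continuous_nsmul ℓ⟩

end

/-!
`ι(M) = ker π` is a compact open subgroup of `A` with countable quotient `F`, so `A` is
σ-compact. A continuous homomorphism `ℝ → A` lands in `ι(M)` by connectedness, where its values
are divisible by every power of `p`, hence zero by Krull's intersection theorem. A continuous
homomorphism `A → ℝ` kills the compact subgroup `ι(M)`, so it factors through the finitely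
generated group `F` and is determined by its values at lifts of generators of `F`.
Multiplication by `ℓ` has finite kernel and finite cokernel on `M` and on `F` (finitely generated
over `ℤ_p`, resp. `ℤ`, whose quotients by `ℓ` are finite), hence on the extension `A`. Finally
`ℓA` contains the open subgroup `ι(ℓM)`, so it is closed, and the open mapping theorem for
σ-compact groups makes multiplication by `ℓ` strict.
-/

open Function Set Topology

section Torsion

structure HasFiniteKerCokerNSMul (G : Type*) [AddCommGroup G] (ℓ : ℕ) : Prop where
  finite_ker : Finite (nsmulAddMonoidHom (α := G) ℓ).ker
  finiteIndex_range : (nsmulAddMonoidHom (α := G) ℓ).range.FiniteIndex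

variable {R N : Type*} [CommRing R] [AddCommGroup N] [Module R N] [Module.Finite R N]

theorem Submodule.finite_torsionBy [IsNoetherianRing R] (a : R)
    [Finite (R ⧸ Ideal.span {a})] : Finite (torsionBy R N a) :=
  have : Module.Finite R (torsionBy R N a) := Module.Finite.iff_fg.mpr (IsNoetherian.noetherian _)
  have : Module.Finite (R ⧸ Ideal.span {a}) (torsionBy R N a) :=
    Module.Finite.of_restrictScalars_finite R _ _
  Module.finite_of_finite (R ⧸ Ideal.span {a})

theorem hasFiniteKerCokerNSMul_of_module [IsNoetherianRing R] (ℓ : ℕ)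
    [Finite (R ⧸ Ideal.span {(ℓ : R)})] : HasFiniteKerCokerNSMul N ℓ where
  finite_ker := by
    have hker : (nsmulAddMonoidHom (α := N) ℓ).ker =
        (Submodule.torsionBy R N ℓ).toAddSubgroup := by
      ext x
      simp [Submodule.mem_torsionBy_iff, Nat.cast_smul_eq_nsmul]
    rw [hker]
    exact Submodule.finite_torsionBy (ℓ : R)
  finiteIndex_range := by
    have hrange : (nsmulAddMonoidHom (α := N) ℓ).range =
        (Ideal.span {(ℓ : R)} • (⊤ : Submodule R N)).toAddSubgroup := by
      ext x
      rw [Submodule.mem_toAddSubgroup, Submodule.ideal_span_singleton_smul,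
        Submodule.mem_smul_pointwise_iff_exists]
      simp [Nat.cast_smul_eq_nsmul]
    have : Finite (N ⧸ Ideal.span {(ℓ : R)} • (⊤ : Submodule R N)) :=
      Module.finite_of_finite (R ⧸ Ideal.span {(ℓ : R)})
    rw [hrange]
    exact @AddSubgroup.finiteIndex_of_finite_quotient _ _ _ this

theorem PadicInt.finite_quotient_span_natCast {p : ℕ} [Fact p.Prime] {ℓ : ℕ} (hℓ : ℓ ≠ 0) :
    Finite (ℤ_[p] ⧸ Ideal.span {(ℓ : ℤ_[p])}) :=
  IsLocalRing.isOpen_iff_finite_quotient.mp <| IsDedekindDomain.isOpen_of_ne_bot <| by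
    simpa using hℓ

theorem Int.finite_quotient_span_natCast {ℓ : ℕ} (hℓ : ℓ ≠ 0) :
    Finite (ℤ ⧸ Ideal.span {(ℓ : ℤ)}) :=
  have : NeZero ℓ := ⟨hℓ⟩
  .of_equiv _ (Int.quotientSpanNatEquivZMod ℓ).symm.toEquiv

end Torsion

section Extension

variable {M A F : Type*} [AddCommGroup M] [AddCommGroup A] [AddCommGroup F]
  {ι : M →+ A} {π : A →+ F}

theorem AddSubgroup.finite_of_finite_map_of_finite_inf_ker {K : AddSubgroup A} (f : A →+ F)
    (hmap : Finite (K.map f)) (hker : Finite (K ⊓ f.ker : AddSubgroup A)) : Finite K := by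
  rw [(f.domRestrict K).finite_iff_finite_ker_range, AddMonoidHom.ker_domRestrict,
    AddMonoidHom.domRestrict_range]
  exact ⟨.of_injective (fun x => (⟨x.1.1, x.1.2, x.2⟩ : (K ⊓ f.ker : AddSubgroup A)))
    fun x y h => Subtype.ext (Subtype.ext (congrArg Subtype.val h :)), hmap⟩

theorem AddSubgroup.eq_top_of_ker_le_of_map_eq_top {K : AddSubgroup A} (hK : π.ker ≤ K)
    (hmap : K.map π = ⊤) : K = ⊤ := by
  rw [← sup_of_le_left hK, ← AddSubgroup.comap_map_eq, hmap, AddSubgroup.comap_top]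

theorem finite_ker_nsmul_of_exact (hι : Injective ι) (hex : π.ker = ι.range) {ℓ : ℕ}
    (hM : Finite (nsmulAddMonoidHom (α := M) ℓ).ker)
    (hF : Finite (nsmulAddMonoidHom (α := F) ℓ).ker) :
    Finite (nsmulAddMonoidHom (α := A) ℓ).ker := by
  refine AddSubgroup.finite_of_finite_map_of_finite_inf_ker π ?_ ?_
  · have hle : (nsmulAddMonoidHom (α := A) ℓ).ker.map π ≤
        (nsmulAddMonoidHom (α := F) ℓ).ker := by
      rintro _ ⟨a, ha, rfl⟩
      simpa [← map_nsmul] using congrArg π ha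
    exact .of_injective _ (AddSubgroup.inclusion_injective hle)
  · have hle : (nsmulAddMonoidHom (α := A) ℓ).ker ⊓ π.ker ≤
        (nsmulAddMonoidHom (α := M) ℓ).ker.map ι := by
      rintro _ ⟨ha, hπa⟩
      obtain ⟨m, rfl⟩ : _ ∈ ι.range := hex ▸ hπa
      refine ⟨m, hι ?_, rfl⟩
      simpa [← map_nsmul] using ha
    have : Finite ((nsmulAddMonoidHom (α := M) ℓ).ker.map ι) :=
      .of_surjective _ (ι.addSubgroupMap_surjective _)
    exact .of_injective _ (AddSubgroup.inclusion_injective hle)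

theorem finiteIndex_range_nsmul_of_exact (hπ : Surjective π) (hex : π.ker = ι.range) {ℓ : ℕ}
    [(nsmulAddMonoidHom (α := M) ℓ).range.FiniteIndex]
    [(nsmulAddMonoidHom (α := F) ℓ).range.FiniteIndex] :
    (nsmulAddMonoidHom (α := A) ℓ).range.FiniteIndex := by
  set H := (nsmulAddMonoidHom (α := A) ℓ).range
  have hmap : H.map π = (nsmulAddMonoidHom (α := F) ℓ).range := by
    rw [AddMonoidHom.map_range,
      show π.comp (nsmulAddMonoidHom ℓ) = (nsmulAddMonoidHom ℓ).comp π by ext; simp,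
      ← AddMonoidHom.map_range, AddMonoidHom.range_eq_top.2 hπ, ← AddMonoidHom.range_eq_map]
  have hcomap : (nsmulAddMonoidHom (α := M) ℓ).range ≤ H.comap ι := by
    rintro _ ⟨m, rfl⟩
    exact ⟨ι m, by simp⟩
  have : (H.comap ι).FiniteIndex := AddSubgroup.finiteIndex_of_le hcomap
  -- `[A : H] = [H ⊔ ι(M) : H] * [A : H ⊔ ι(M)] = [M : ι⁻¹ H] * [F : ℓF]`
  constructor
  rw [← AddSubgroup.relIndex_mul_index (le_sup_left : H ≤ H ⊔ π.ker),
    AddSubgroup.relIndex_sup_left, ← AddSubgroup.comap_map_eq,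
    AddSubgroup.index_comap_of_surjective _ hπ, hmap, hex, AddMonoidHom.range_eq_map,
    ← AddSubgroup.relIndex_comap, AddSubgroup.relIndex_top_right]
  exact mul_ne_zero AddSubgroup.FiniteIndex.index_ne_zero AddSubgroup.FiniteIndex.index_ne_zero

theorem HasFiniteKerCokerNSMul.of_exact (hι : Injective ι) (hπ : Surjective π)
    (hex : π.ker = ι.range) {ℓ : ℕ} (hM : HasFiniteKerCokerNSMul M ℓ)
    (hF : HasFiniteKerCokerNSMul F ℓ) : HasFiniteKerCokerNSMul A ℓ where
  finite_ker := finite_ker_nsmul_of_exact hι hex hM.finite_ker hF.finite_ker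
  finiteIndex_range :=
    have := hM.finiteIndex_range
    have := hF.finiteIndex_range
    finiteIndex_range_nsmul_of_exact hπ hex

theorem exists_finset_forall_eq_zero_of_ker_le [AddGroup.FG F] (hπ : Surjective π) :
    ∃ T : Finset A, ∀ {G : Type*} [AddGroup G] (f : A →+ G), π.ker ≤ f.ker →
      (∀ t ∈ T, f t = 0) → f = 0 := by
  classical
  obtain ⟨S, hS⟩ := AddGroup.fg_def.mp ‹_›
  refine ⟨S.image (surjInv hπ), fun f hker hT => ?_⟩
  have hmap : f.ker.map π = ⊤ := by
    rw [eq_top_iff, ← hS, AddSubgroup.closure_le]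
    intro s hs
    exact ⟨surjInv hπ s, hT _ (Finset.mem_image_of_mem _ hs), surjInv_eq hπ s⟩
  ext a
  exact (AddSubgroup.eq_top_of_ker_le_of_map_eq_top hker hmap ▸ AddSubgroup.mem_top a :)

end Extension

section Divisible

variable {R N : Type*} [CommRing R] [IsNoetherianRing R] [IsLocalRing R]
  [AddCommGroup N] [Module R N] [Module.Finite R N]

theorem eq_zero_of_forall_eq_pow_smul {r : R} (hr : r ∈ IsLocalRing.maximalIdeal R) {x : N}
    (hx : ∀ k : ℕ, ∃ y, x = r ^ k • y) : x = 0 := by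
  have hKrull := Ideal.iInf_pow_smul_eq_bot_of_isLocalRing (M := N) _
    (IsLocalRing.maximalIdeal.isMaximal R).ne_top
  rw [← Submodule.mem_bot R, ← hKrull, Submodule.mem_iInf]
  intro k
  obtain ⟨y, rfl⟩ := hx k
  exact Submodule.smul_mem_smul (Ideal.pow_mem_pow hr k) Submodule.mem_top

theorem AddMonoidHom.eq_zero_of_rat_module {V : Type*} [AddCommGroup V] [Module ℚ V]
    {p : ℕ} (hp : p ≠ 0) (hpR : (p : R) ∈ IsLocalRing.maximalIdeal R) (f : V →+ N) : f = 0 := by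
  ext x
  refine eq_zero_of_forall_eq_pow_smul hpR fun k => ⟨f (((p : ℚ) ^ k)⁻¹ • x), ?_⟩
  rw [← Nat.cast_pow, Nat.cast_smul_eq_nsmul, ← map_nsmul, ← Nat.cast_smul_eq_nsmul ℚ,
    Nat.cast_pow, smul_inv_smul₀ (by positivity)]

theorem ContinuousAddMonoidHom.real_eq_zero_of_exact {A F : Type*} [AddCommGroup A]
    [TopologicalSpace A] [AddCommGroup F] [TopologicalSpace F] [DiscreteTopology F]
    {ι : N →+ A} (hι : Injective ι) {π : ContinuousAddMonoidHom A F}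
    (hex : π.toAddMonoidHom.ker = ι.range) {p : ℕ} (hp : p ≠ 0)
    (hpR : (p : R) ∈ IsLocalRing.maximalIdeal R) (f : ContinuousAddMonoidHom ℝ A) : f = 0 := by
  have hrange (x : ℝ) : f x ∈ ι.range := by
    rw [← hex]
    exact (PreconnectedSpace.constant inferInstance (π.continuous.comp f.continuous)
      (y := 0)).trans (by simp)
  let g : ℝ →+ N := (AddMonoidHom.ofInjective hι).symm.toAddMonoidHom.comp
    (f.toAddMonoidHom.codRestrict _ hrange)
  ext x
  have hx : ι (g x) = f x := AddMonoidHom.apply_ofInjective_symm hι ⟨f x, hrange x⟩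
  rw [← hx, g.eq_zero_of_rat_module hp hpR]
  simp

end Divisible

section Topology

theorem AddMonoidHom.eq_zero_of_isBounded_range {G : Type*} [AddGroup G] (f : G →+ ℝ)
    (hf : Bornology.IsBounded (Set.range f)) : f = 0 := by
  ext g
  by_contra hg
  obtain ⟨C, hC⟩ := isBounded_iff_forall_norm_le.mp hf
  obtain ⟨n, hn⟩ := exists_nat_gt (C / |f g|)
  have hfg : 0 < |f g| := abs_pos.mpr hg
  have := hC _ ⟨n • g, rfl⟩
  rw [map_nsmul, nsmul_eq_mul, norm_mul, Real.norm_natCast, Real.norm_eq_abs] at this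
  rw [div_lt_iff₀ hfg] at hn
  linarith

theorem ContinuousAddMonoidHom.eq_zero_of_compactSpace {G : Type*} [AddGroup G]
    [TopologicalSpace G] [CompactSpace G] (f : ContinuousAddMonoidHom G ℝ) : f = 0 := by
  ext g
  exact DFunLike.congr_fun (f.toAddMonoidHom.eq_zero_of_isBounded_range
    (isCompact_range f.continuous).isBounded) g

theorem ContinuousAddMonoidHom.exists_fin_spanning_real {A : Type*} [AddCommGroup A]
    [TopologicalSpace A] (T : Finset A)
    (hT : ∀ f : ContinuousAddMonoidHom A ℝ, (∀ t ∈ T, f t = 0) → ∀ a, f a = 0) :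
    ∃ (n : ℕ) (v : Fin n → ContinuousAddMonoidHom A ℝ),
      ∀ f : ContinuousAddMonoidHom A ℝ, ∃ c : Fin n → ℝ, ∀ a, f a = ∑ i, c i * v i a := by
  let W : Submodule ℝ (A → ℝ) :=
    { carrier := range fun f : ContinuousAddMonoidHom A ℝ => ⇑f
      add_mem' := by
        rintro _ _ ⟨f, rfl⟩ ⟨g, rfl⟩
        exact ⟨f + g, rfl⟩
      zero_mem' := ⟨0, rfl⟩
      smul_mem' := by
        rintro r _ ⟨f, rfl⟩
        exact ⟨⟨(AddMonoidHom.mulLeft r).comp f, continuous_const.mul f.continuous⟩, rfl⟩ }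
  let E : W →ₗ[ℝ] (T → ℝ) := LinearMap.pi fun t => (LinearMap.proj t.1).comp W.subtype
  have hE : Injective E := by
    refine (injective_iff_map_eq_zero E).2 fun ⟨w, f, hf⟩ hw => ?_
    subst hf
    ext a
    exact hT f (fun t ht => congrFun hw ⟨t, ht⟩) a
  have : FiniteDimensional ℝ W := .of_injective E hE
  let b := Module.finBasis ℝ W
  choose v hv using fun i => (b i).2
  refine ⟨_, v, fun f => ⟨b.repr ⟨f, f, rfl⟩, fun a => ?_⟩⟩
  have := congrArg (fun w : W => (w : A → ℝ) a) (b.sum_repr ⟨f, f, rfl⟩)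
  simp only [Submodule.coe_sum, Submodule.coe_smul, Finset.sum_apply, Pi.smul_apply,
    smul_eq_mul] at this
  simp only [hv]
  exact this.symm

theorem sigmaCompactSpace_of_isCompact_of_countable_quotient {G : Type*} [AddGroup G]
    [TopologicalSpace G] [ContinuousAdd G] (U : AddSubgroup G) (hU : IsCompact (U : Set G))
    [Countable (G ⧸ U)] : SigmaCompactSpace G := by
  refine SigmaCompactSpace.of_countable (range fun q : G ⧸ U => (q.out + ·) '' U)
    (countable_range _) (forall_mem_range.2 fun q => hU.image (continuous_const_add _)) ?_
  refine sUnion_eq_univ_iff.2 fun g => ⟨_, mem_range_self (QuotientAddGroup.mk g : G ⧸ U), ?_⟩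
  obtain ⟨u, hu⟩ := QuotientAddGroup.mk_out_eq_add U g
  exact ⟨-u, U.neg_mem u.2, by simp [hu]⟩

theorem AddSubgroup.topologicalClosure_eq_self {G : Type*} [AddGroup G] [TopologicalSpace G]
    [IsTopologicalAddGroup G] {H : AddSubgroup G} (hH : IsClosed (H : Set G)) :
    H.topologicalClosure = H :=
  SetLike.ext' (by rw [AddSubgroup.topologicalClosure_coe, hH.closure_eq])

theorem isOpen_range_nsmul_of_isOpenEmbedding {M A : Type*} [AddCommGroup M] [TopologicalSpace M]
    [IsTopologicalAddGroup M] [CompactSpace M] [T2Space M] [AddCommGroup A] [TopologicalSpace A]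
    [IsTopologicalAddGroup A] {ι : M →+ A} (hι : IsOpenEmbedding ι) {ℓ : ℕ}
    [(nsmulAddMonoidHom (α := M) ℓ).range.FiniteIndex] :
    IsOpen ((nsmulAddMonoidHom (α := A) ℓ).range : Set A) := by
  have hclosed : IsClosed ((nsmulAddMonoidHom (α := M) ℓ).range : Set M) :=
    (isCompact_range (continuous_nsmul ℓ)).isClosed
  refine AddSubgroup.isOpen_mono (H₁ := (nsmulAddMonoidHom (α := M) ℓ).range.map ι) ?_ ?_
  · rintro _ ⟨_, ⟨m, rfl⟩, rfl⟩
    exact ⟨ι m, by simp⟩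
  · rw [AddSubgroup.coe_map]
    exact hι.isOpenMap _ (AddSubgroup.isOpen_of_isClosed_of_finiteIndex _ hclosed)

theorem isStrict_of_isClosed_range {A B : Type} [AddCommGroup A] [TopologicalSpace A]
    [IsTopologicalAddGroup A] [SigmaCompactSpace A] [AddCommGroup B] [TopologicalSpace B]
    [IsTopologicalAddGroup B] [LocallyCompactSpace B] [T2Space B]
    (f : ContinuousAddMonoidHom A B) (hf : IsClosed (f.toAddMonoidHom.range : Set B)) :
    IsStrict f := by
  set S := f.toAddMonoidHom.range.topologicalClosure
  have : LocallyCompactSpace S :=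
    (AddSubgroup.isClosed_topologicalClosure _).locallyCompactSpace
  let ρ : A →+ S :=
    f.toAddMonoidHom.codRestrict S fun a => AddSubgroup.le_topologicalClosure _ ⟨a, rfl⟩
  have hρ : Surjective ρ := by
    rintro ⟨b, hb⟩
    rw [show S = f.toAddMonoidHom.range from AddSubgroup.topologicalClosure_eq_self hf] at hb
    obtain ⟨a, rfl⟩ := hb
    exact ⟨a, rfl⟩
  have hρcont : Continuous ρ := f.continuous.subtype_mk _
  have hρopen : IsOpenMap ρ := ρ.isOpenMap_of_sigmaCompact hρ hρcont
  have hcomp : coimToIm f ∘ QuotientAddGroup.mk = ρ := rfl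
  have hmk := QuotientAddGroup.isOpenQuotientMap_mk (N := f.toAddMonoidHom.ker)
  refine ⟨hmk.continuous_comp_iff.1 (hcomp ▸ hρcont), hmk.isOpenMap_iff.2 (hcomp ▸ hρopen),
    fun x y h => ?_, (hmk.surjective.of_comp_iff _).1 (hcomp ▸ hρ)⟩
  exact QuotientAddGroup.kerLift_injective f.toAddMonoidHom (congrArg Subtype.val h :)

end Topology

section TopologicalExtension

variable {M A F : Type*} [AddCommGroup M] [TopologicalSpace M] [AddCommGroup A]
  [TopologicalSpace A] [AddCommGroup F] [TopologicalSpace F]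
  {ι : ContinuousAddMonoidHom M A} {π : ContinuousAddMonoidHom A F}

theorem isOpen_range_of_exact [DiscreteTopology F]
    (hex : π.toAddMonoidHom.ker = ι.toAddMonoidHom.range) : IsOpen (Set.range ι) := by
  rw [show Set.range ι = π ⁻¹' {0} from Set.ext fun a => (SetLike.ext_iff.mp hex a).symm]
  exact (isOpen_discrete _).preimage π.continuous

theorem sigmaCompactSpace_of_exact [CompactSpace M] [ContinuousAdd A] [AddGroup.FG F]
    (hπ : Surjective π) (hex : π.toAddMonoidHom.ker = ι.toAddMonoidHom.range) :
    SigmaCompactSpace A :=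
  have : Module.Finite ℤ F := Module.Finite.iff_addGroup_fg.mpr ‹_›
  have : Countable F := Finsupp.Countable.of_moduleFinite (R := ℤ)
  have : Countable (A ⧸ π.toAddMonoidHom.ker) :=
    (QuotientAddGroup.quotientKerEquivOfSurjective _ hπ).injective.countable
  sigmaCompactSpace_of_isCompact_of_countable_quotient π.toAddMonoidHom.ker
    (by rw [hex, AddMonoidHom.coe_range]; exact isCompact_range ι.continuous)

theorem ker_le_ker_of_exact [CompactSpace M]
    (hex : π.toAddMonoidHom.ker = ι.toAddMonoidHom.range) (f : ContinuousAddMonoidHom A ℝ) :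
    π.toAddMonoidHom.ker ≤ f.toAddMonoidHom.ker := by
  rintro a ha
  obtain ⟨m, rfl⟩ : a ∈ ι.toAddMonoidHom.range := hex ▸ ha
  exact DFunLike.congr_fun (f.comp ι).eq_zero_of_compactSpace m

end TopologicalExtension

theorem HasFiniteKerCokerNSMul.isStrict_and_finite_of_isOpen_range {A : Type} [AddCommGroup A]
    [TopologicalSpace A] [IsTopologicalAddGroup A] [SigmaCompactSpace A] [LocallyCompactSpace A]
    [T2Space A] {ℓ : ℕ} (hA : HasFiniteKerCokerNSMul A ℓ)
    (hopen : IsOpen ((nsmulAddMonoidHom (α := A) ℓ).range : Set A)) :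
    IsStrict (mulByHom (A := A) ℓ) ∧ Finite (mulByHom (A := A) ℓ).toAddMonoidHom.ker ∧
      Finite (A ⧸ (mulByHom (A := A) ℓ).toAddMonoidHom.range.topologicalClosure) := by
  have hclosed : IsClosed ((mulByHom (A := A) ℓ).toAddMonoidHom.range : Set A) :=
    AddSubgroup.isClosed_of_isOpen _ hopen
  refine ⟨isStrict_of_isClosed_range _ hclosed, hA.finite_ker, ?_⟩
  rw [AddSubgroup.topologicalClosure_eq_self hclosed]
  exact @AddSubgroup.finite_quotient_of_finiteIndex _ _ _ hA.finiteIndex_range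

theorem extension_has_finite_ranks_general
    (p : ℕ) [Fact p.Prime]
    -- `A`, a locally compact abelian group
    (A : Type) [AddCommGroup A] [TopologicalSpace A] [IsTopologicalAddGroup A]
    [LocallyCompactSpace A] [T2Space A]
    -- `M`, a finitely generated `ℤ_p`-module with its p-adic (compact) topology
    (M : Type) [AddCommGroup M] [TopologicalSpace M] [IsTopologicalAddGroup M]
    [Module ℤ_[p] M] [Module.Finite ℤ_[p] M]
    [CompactSpace M] [T2Space M]
    -- `F`, a finitely generated discrete abelian group
    (F : Type) [AddCommGroup F] [TopologicalSpace F]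
    [DiscreteTopology F] [AddGroup.FG F]
    -- `A` is an extension of `F` by `M`
    (ι : ContinuousAddMonoidHom M A) (hι : Topology.IsClosedEmbedding ι)
    (π : ContinuousAddMonoidHom A F) (hπ : Function.Surjective π)
    (hex : π.toAddMonoidHom.ker = ι.toAddMonoidHom.range) :
    -- `Hom(ℝ, A)` is a finite-dimensional real vector space (scalar action by
    -- precomposition with multiplication on ℝ)
    (∃ (n : ℕ) (v : Fin n → ContinuousAddMonoidHom ℝ A),
      ∀ f : ContinuousAddMonoidHom ℝ A, ∃ c : Fin n → ℝ,
        ∀ x, f x = ∑ i, v i (c i * x)) ∧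
    -- `Hom(A, ℝ)` is a finite-dimensional real vector space (pointwise action)
    (∃ (n : ℕ) (v : Fin n → ContinuousAddMonoidHom A ℝ),
      ∀ f : ContinuousAddMonoidHom A ℝ, ∃ c : Fin n → ℝ,
        ∀ a, f a = ∑ i, c i * v i a) ∧
    -- multiplication by each prime `ℓ` is strict with finite kernel and cokernel
    (∀ ℓ : ℕ, ℓ.Prime →
      IsStrict (mulByHom (A := A) ℓ) ∧
      Finite ((mulByHom (A := A) ℓ).toAddMonoidHom.ker) ∧
      Finite (A ⧸ ((mulByHom (A := A) ℓ).toAddMonoidHom.range.topologicalClosure))) := by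
  have hιopen : IsOpenEmbedding ι := ⟨hι.isEmbedding, isOpen_range_of_exact hex⟩
  have := sigmaCompactSpace_of_exact hπ hex
  obtain ⟨T, hT⟩ := exists_finset_forall_eq_zero_of_ker_le hπ
  refine ⟨⟨0, Fin.elim0, fun f => ⟨Fin.elim0, fun x => ?_⟩⟩,
    ContinuousAddMonoidHom.exists_fin_spanning_real T fun f hf =>
      DFunLike.congr_fun (hT f.toAddMonoidHom (ker_le_ker_of_exact hex f) hf), fun ℓ hℓ => ?_⟩
  · simp [ContinuousAddMonoidHom.real_eq_zero_of_exact hι.injective hex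
      (Fact.out : p.Prime).ne_zero ((IsLocalRing.mem_maximalIdeal _).2 PadicInt.p_nonunit) f]
  · have hM : HasFiniteKerCokerNSMul M ℓ :=
      have := PadicInt.finite_quotient_span_natCast (p := p) hℓ.ne_zero
      hasFiniteKerCokerNSMul_of_module (R := ℤ_[p]) ℓ
    have hF : HasFiniteKerCokerNSMul F ℓ :=
      have : Module.Finite ℤ F := Module.Finite.iff_addGroup_fg.mpr ‹_›
      have := Int.finite_quotient_span_natCast hℓ.ne_zero
      hasFiniteKerCokerNSMul_of_module (R := ℤ) ℓ
    have := hM.finiteIndex_range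
    exact (hM.of_exact hι.injective hπ hex hF).isStrict_and_finite_of_isOpen_range
      (isOpen_range_nsmul_of_isOpenEmbedding hιopen)

theorem extension_has_finite_ranks
    (p : ℕ) [Fact p.Prime]
    -- `A`, a locally compact abelian group
    (A : Type) [AddCommGroup A] [TopologicalSpace A] [IsTopologicalAddGroup A]
    [LocallyCompactSpace A] [T2Space A]
    -- `M`, a finitely generated `ℤ_p`-module with its p-adic (compact) topology
    (M : Type) [AddCommGroup M] [TopologicalSpace M] [IsTopologicalAddGroup M]
    [Module ℤ_[p] M] [Module.Finite ℤ_[p] M] [ContinuousSMul ℤ_[p] M]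
    [CompactSpace M] [T2Space M]
    -- `F`, a finitely generated discrete abelian group
    (F : Type) [AddCommGroup F] [TopologicalSpace F] [IsTopologicalAddGroup F]
    [DiscreteTopology F] [AddGroup.FG F]
    -- `A` is an extension of `F` by `M`
    (ι : ContinuousAddMonoidHom M A) (hι : Topology.IsClosedEmbedding ι)
    (π : ContinuousAddMonoidHom A F) (hπ : Function.Surjective π)
    (hq : Topology.IsQuotientMap ⇑π)
    (hex : π.toAddMonoidHom.ker = ι.toAddMonoidHom.range) :
    -- `Hom(ℝ, A)` is a finite-dimensional real vector space (scalar action by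
    -- precomposition with multiplication on ℝ)
    (∃ (n : ℕ) (v : Fin n → ContinuousAddMonoidHom ℝ A),
      ∀ f : ContinuousAddMonoidHom ℝ A, ∃ c : Fin n → ℝ,
        ∀ x, f x = ∑ i, v i (c i * x)) ∧
    -- `Hom(A, ℝ)` is a finite-dimensional real vector space (pointwise action)
    (∃ (n : ℕ) (v : Fin n → ContinuousAddMonoidHom A ℝ),
      ∀ f : ContinuousAddMonoidHom A ℝ, ∃ c : Fin n → ℝ,
        ∀ a, f a = ∑ i, c i * v i a) ∧
    -- multiplication by each prime `ℓ` is strict with finite kernel and cokernel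
    (∀ ℓ : ℕ, ℓ.Prime →
      IsStrict (mulByHom (A := A) ℓ) ∧
      Finite ((mulByHom (A := A) ℓ).toAddMonoidHom.ker) ∧
      Finite (A ⧸ ((mulByHom (A := A) ℓ).toAddMonoidHom.range.topologicalClosure))) :=
  extension_has_finite_ranks_general p A M F ι hι π hπ hex
end
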